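/- If P ⊆ ℝ^n is a polyhedron and (A^=, b^=) denotes the subsystem of inequalities aⁱx ≤ bᵢ that hold with equality at every point of P, then dim(P) + rank(A^=, b^=) = n. -/

import Mathlib

/-!
The points of `P` satisfy the implicit equalities `A^= x = b^=`, so `P` spans an affine space whose
direction lies in `ker A^=`. Conversely, averaging points of `P` gives a point `z` satisfying
every other inequality strictly, and from `z` one can move a little in any direction of
`ker A^=` without leaving `P`; hence the direction of the affine hull of `P` is exactly
`ker A^=`, whose dimension is `dim P`. Rank–nullity for `A^=` finishes the proof, because the
column `b^= = A^= x₀` (for any `x₀ ∈ P`) does not increase the rank.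
-/

open Module Matrix Filter Topology

section AffineDimension

variable {k V : Type*} [Field k] [AddCommGroup V] [Module k V]

theorem affineIndependent_iff_forall_sum_smul_eq_zero {ι : Type*} [Fintype ι] {p : ι → V} :
    AffineIndependent k p ↔
      ∀ w : ι → k, ∑ i, w i • p i = 0 → ∑ i, w i = 0 → ∀ i, w i = 0 := by
  rw [affineIndependent_iff_of_fintype]
  refine forall_congr' fun w => ⟨fun h hp hw => h hw ?_, fun h hw hp => h ?_ hw⟩
  · rwa [Finset.weightedVSub_eq_linear_combination _ hw]
  · rwa [Finset.weightedVSub_eq_linear_combination _ hw] at hp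

variable [FiniteDimensional k V]

theorem le_finrank_vectorSpan_of_affineIndependent {s : Set V} {d : ℕ} {p : Fin (d + 1) → V}
    (hp : AffineIndependent k p) (hps : ∀ i, p i ∈ s) : d ≤ finrank k (vectorSpan k s) :=
  (hp.finrank_vectorSpan (Fintype.card_fin _)).ge.trans
    (Submodule.finrank_mono (vectorSpan_mono k (Set.range_subset_iff.2 hps)))

theorem finrank_vectorSpan_le_of_forall_not_affineIndependent {s : Set V} {d : ℕ}
    (h : ∀ p : Fin (d + 2) → V, (∀ i, p i ∈ s) → ¬AffineIndependent k p) :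
    finrank k (vectorSpan k s) ≤ d := by
  obtain ⟨t, hts, hspan, ht⟩ := exists_affineIndependent k V s
  have := finite_of_fin_dim_affineIndependent k ht
  have := Fintype.ofFinite t
  rw [← direction_affineSpan, ← hspan, direction_affineSpan, ← Subtype.range_coe (s := t)]
  by_contra! hlt
  rcases isEmpty_or_nonempty t with ht₀ | ht₀
  · rw [Set.range_eq_empty, vectorSpan_empty, finrank_bot] at hlt
    exact Nat.not_lt_zero _ hlt
  obtain ⟨f⟩ : Nonempty (Fin (d + 2) ↪ t) := Function.Embedding.nonempty_of_card_le <| by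
    have := finrank_vectorSpan_range_add_one_le k ((↑) : t → V)
    rw [Fintype.card_fin]
    convert (Nat.succ_le_succ hlt).trans this using 1
  exact h (fun i => f i) (fun i => hts (f i).2) (ht.comp_embedding f)

end AffineDimension

namespace Matrix

theorem rank_fromCols_mul_right {R m n o : Type*} [Field R] [Fintype n] [Fintype o]
    (A : Matrix m n R) (X : Matrix n o R) : (fromCols A (A * X)).rank = A.rank := by
  suffices h : LinearMap.range (fromCols A (A * X)).mulVecLin = LinearMap.range A.mulVecLin by
    rw [rank, rank, h]
  apply le_antisymm
  · rintro _ ⟨v, rfl⟩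
    exact ⟨v ∘ Sum.inl + X *ᵥ (v ∘ Sum.inr), by simp [mulVec_add, mulVec_mulVec]⟩
  · rintro _ ⟨v, rfl⟩
    exact ⟨Sum.elim v 0, by simp⟩

end Matrix

section Polyhedron

variable {ι σ : Type*} [Fintype σ]

def polyhedron (A : Matrix ι σ ℝ) (b : ι → ℝ) : Set (σ → ℝ) := {x | A *ᵥ x ≤ b}

def implicitEqualities (A : Matrix ι σ ℝ) (b : ι → ℝ) : Set ι :=
  {i | ∀ x ∈ polyhedron A b, (A *ᵥ x) i = b i}

variable {A : Matrix ι σ ℝ} {b : ι → ℝ}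

theorem exists_mem_polyhedron_forall_lt [Finite ι] (hne : (polyhedron A b).Nonempty) :
    ∃ z ∈ polyhedron A b, ∀ i ∉ implicitEqualities A b, (A *ᵥ z) i < b i := by
  classical
  have := Fintype.ofFinite ι
  suffices ∀ s : Finset ι, ∃ z ∈ polyhedron A b, ∀ i ∈ s, i ∉ implicitEqualities A b →
      (A *ᵥ z) i < b i by
    simpa using this Finset.univ
  intro s
  induction s using Finset.induction_on with
  | empty =>
    obtain ⟨x, hx⟩ := hne
    exact ⟨x, hx, by simp⟩
  | insert i s _ ih =>
    obtain ⟨z, hz, hzs⟩ := ih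
    by_cases hi : i ∈ implicitEqualities A b
    · exact ⟨z, hz, by simpa [hi] using hzs⟩
    obtain ⟨y, hy, hyi⟩ : ∃ y ∈ polyhedron A b, (A *ᵥ y) i ≠ b i := by
      simpa [implicitEqualities] using hi
    have hmid : ∀ j, (A *ᵥ ((2 : ℝ)⁻¹ • (z + y))) j = ((A *ᵥ z) j + (A *ᵥ y) j) / 2 := by
      intro j
      simp [mulVec_smul, mulVec_add]
      ring
    refine ⟨(2 : ℝ)⁻¹ • (z + y), fun j => ?_, ?_⟩
    · rw [hmid]
      linarith [hz j, hy j]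
    · rintro j hj hjI
      rw [hmid]
      rcases Finset.mem_insert.1 hj with rfl | hj
      · linarith [hz j, lt_of_le_of_ne (hy j) hyi]
      · linarith [hzs j hj hjI, hy j]

theorem exists_ne_zero_add_smul_mem_polyhedron [Finite ι] {z w : σ → ℝ}
    (hz : z ∈ polyhedron A b) (hzlt : ∀ i ∉ implicitEqualities A b, (A *ᵥ z) i < b i)
    (hw : ∀ i ∈ implicitEqualities A b, (A *ᵥ w) i = 0) :
    ∃ t : ℝ, t ≠ 0 ∧ z + t • w ∈ polyhedron A b := by
  have hrow : ∀ i, ∀ᶠ t in 𝓝 (0 : ℝ), (A *ᵥ (z + t • w)) i ≤ b i := by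
    intro i
    simp only [mulVec_add, mulVec_smul, Pi.add_apply, Pi.smul_apply, smul_eq_mul]
    by_cases hi : i ∈ implicitEqualities A b
    · simp [hw i hi, hz i]
    · have hcont : Tendsto (fun t : ℝ => (A *ᵥ z) i + t * (A *ᵥ w) i) (𝓝 0) (𝓝 ((A *ᵥ z) i)) :=
        Continuous.tendsto' (by fun_prop) _ _ (by simp)
      exact (hcont.eventually_lt_const (hzlt i hi)).mono fun _ => le_of_lt
  have hmem : ∀ᶠ t in 𝓝[≠] (0 : ℝ), z + t • w ∈ polyhedron A b :=
    nhdsWithin_le_nhds (eventually_all.2 hrow)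
  exact (hmem.and self_mem_nhdsWithin).exists.imp fun t ht => ⟨ht.2, ht.1⟩

theorem vectorSpan_polyhedron_eq_ker [Finite ι] (hne : (polyhedron A b).Nonempty) :
    vectorSpan ℝ (polyhedron A b) =
      LinearMap.ker (A.submatrix ((↑) : implicitEqualities A b → ι) id).mulVecLin := by
  apply le_antisymm
  · rw [vectorSpan_def, Submodule.span_le]
    rintro _ ⟨x, hx, y, hy, rfl⟩
    ext i
    change (A *ᵥ (x - y)) i = 0
    rw [mulVec_sub, Pi.sub_apply, i.2 x hx, i.2 y hy, sub_self]
  · intro w hw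
    obtain ⟨z, hz, hzlt⟩ := exists_mem_polyhedron_forall_lt hne
    obtain ⟨t, ht, hzt⟩ := exists_ne_zero_add_smul_mem_polyhedron hz hzlt fun i hi =>
      congrFun (LinearMap.mem_ker.1 hw) ⟨i, hi⟩
    have hw_eq : w = t⁻¹ • ((z + t • w) -ᵥ z) := by simp [smul_smul, ht]
    exact hw_eq ▸ Submodule.smul_mem _ _ (vsub_mem_vectorSpan ℝ hzt hz)

end Polyhedron

open Matrix in
/-- For a nonempty polyhedron `P = {x : A x ≤ b}` in ℝⁿ, if `I` is the set of rows
whose inequalities are tight at every point of `P`, then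
`dim P + rank (A^=, b^=) = n`, where the dimension `d` of `P` is one less than the
maximal number of affinely independent points of `P`. -/
theorem stmt3 (n m : ℕ) (A : Matrix (Fin m) (Fin n) ℝ) (b : Fin m → ℝ)
    (P : Set (Fin n → ℝ)) (hP : P = {x | ∀ i, ∑ j, A i j * x j ≤ b i})
    (hPne : P.Nonempty)
    (I : Set (Fin m)) (hI : I = {i | ∀ x ∈ P, ∑ j, A i j * x j = b i})
    (Aeq : Matrix I (Fin n ⊕ Unit) ℝ)
    (hAeq : Aeq = fun i j => Sum.elim (fun j' => A i.1 j') (fun _ => b i.1) j)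
    (d : ℕ)
    (hdim₁ : ∃ x : Fin (d + 1) → (Fin n → ℝ), (∀ i, x i ∈ P) ∧
        ∀ lam : Fin (d + 1) → ℝ,
          ∑ i, lam i • x i = 0 → ∑ i, lam i = 0 → ∀ i, lam i = 0)
    (hdim₂ : ∀ x : Fin (d + 2) → (Fin n → ℝ), (∀ i, x i ∈ P) →
        ¬ ∀ lam : Fin (d + 2) → ℝ,
            ∑ i, lam i • x i = 0 → ∑ i, lam i = 0 → ∀ i, lam i = 0) :
    d + Aeq.rank = n := by
  change P = polyhedron A b at hP
  subst hP hI hAeq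
  set AI := A.submatrix ((↑) : implicitEqualities A b → Fin m) id
  obtain ⟨x₀, hx₀⟩ := hPne
  have hb : (fun i : implicitEqualities A b => b i) = AI *ᵥ x₀ :=
    funext fun i => (i.2 x₀ hx₀).symm
  have hrank : (fromCols AI (replicateCol Unit fun i => b i)).rank = AI.rank := by
    rw [hb, replicateCol_mulVec, rank_fromCols_mul_right]
  have hdim : d = finrank ℝ (vectorSpan ℝ (polyhedron A b)) := by
    obtain ⟨x, hxP, hx⟩ := hdim₁
    exact le_antisymm
      (le_finrank_vectorSpan_of_affineIndependent
        (affineIndependent_iff_forall_sum_smul_eq_zero.2 hx) hxP)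
      (finrank_vectorSpan_le_of_forall_not_affineIndependent fun x hxP hx =>
        hdim₂ x hxP (affineIndependent_iff_forall_sum_smul_eq_zero.1 hx))
  change d + (fromCols AI (replicateCol Unit fun i => b i)).rank = n
  rw [hrank, hdim, vectorSpan_polyhedron_eq_ker ⟨x₀, hx₀⟩, rank, add_comm,
    LinearMap.finrank_range_add_finrank_ker, finrank_fin_fun]
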